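/- arXiv:1205.3688 — 4 statements merged into one kernel-verified Lean document; each statement's English description precedes it below -/
import Mathlib

section
/- As √(2n+l)/(l+2) → +∞, one has λ_{2,B}(n,l) ~ (2n+l)^s · I, where I = ∫₀^{+∞} θ^{-2s-1}(1 − e^{−θ²/2}) dθ. Precisely: for every ε > 0 there exists R > 0 such that for all integers n, l ≥ 0 with √(2n+l)/(l+2) ≥ R, one has |λ_{2,B}(n,l)/(2n+l)^s − I| ≤ ε. -/
/-!
Write `N = 2n + l`. For `0 < θ ≤ 1/(l+2)`, Taylor expansion gives `0 ≤ e^{-θ²/2} - cos θ ≤ θ⁴/4`,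
and expanding `P_l(1 - 2t)` in powers of `t = sin²(θ/2)` gives `|1 - P_l(cos θ)| ≤ l²θ²`; hence
`P_l(cos θ) cos^N θ = e^{-Nθ²/2} (1 + O(Nθ⁴ + l²θ²))`. Replacing the integrand of `λ_{2,B}` by
`θ^{-2s-1} (1 - e^{-Nθ²/2})` therefore costs `O(N^{s-1}(1 + l²))`, by the scaling `θ ↦ θ/√N` of the
Gaussian moments, and extending the integral to `(0, ∞)` costs at most `(l+2)^{2s}/(2s)`. The
extended integral is exactly `N^s I` by the same scaling. Relative to `N^s`, both errors are
`O((l+2)²/N + ((l+2)²/N)^s)`, which tends to `0`.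
-/

open MeasureTheory Real

/-- The `l`-th Legendre polynomial via the Rodrigues formula. -/
noncomputable def legP (l : ℕ) (x : ℝ) : ℝ :=
  (1 / (2 ^ l * Nat.factorial l)) * iteratedDeriv l (fun y : ℝ => (y ^ 2 - 1) ^ l) x

/-- The term `λ_{2,B}(n,l)` in the splitting of the Boltzmann eigenvalues. -/
noncomputable def lam2B (s : ℝ) (n l : ℕ) : ℝ :=
  ∫ θ in (0:ℝ)..(1 / ((l : ℝ) + 2)),
    θ ^ (-2 * s - 1) * (1 - legP l (Real.cos θ) * (Real.cos θ) ^ (2 * n + l))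

open Set Finset Filter Topology

lemma Polynomial.iteratedDeriv_eval (p : Polynomial ℝ) (n : ℕ) (x : ℝ) :
    iteratedDeriv n (fun y => p.eval y) x = (Polynomial.derivative^[n] p).eval x := by
  induction n generalizing x with
  | zero => simp
  | succ n ih =>
    rw [iteratedDeriv_succ, _root_.funext ih, Function.iterate_succ_apply', Polynomial.deriv]

lemma legP_eq_sum (l : ℕ) (x : ℝ) :
    legP l x = ∑ k ∈ range (l + 1),
      (l.choose k : ℝ) ^ 2 * ((x - 1) / 2) ^ k * ((x + 1) / 2) ^ (l - k) := by
  have hpoly : (fun y : ℝ => (y ^ 2 - 1) ^ l) = fun y => (((Polynomial.X - Polynomial.C 1) ^ l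
      * (Polynomial.X + Polynomial.C 1) ^ l : Polynomial ℝ)).eval y := by
    ext y
    simp only [Polynomial.eval_pow, Polynomial.eval_mul, Polynomial.eval_sub, Polynomial.eval_add,
      Polynomial.eval_X, Polynomial.eval_C, ← mul_pow]
    ring
  rw [legP, hpoly, Polynomial.iteratedDeriv_eval, Polynomial.iterate_derivative_mul,
    Polynomial.eval_finsetSum, Finset.mul_sum]
  refine Finset.sum_congr rfl fun k hk => ?_
  have hkl : k ≤ l := Nat.lt_succ_iff.mp (Finset.mem_range.mp hk)
  rw [Polynomial.iterate_derivative_X_sub_pow, Polynomial.iterate_derivative_X_add_pow,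
    Nat.sub_sub_self hkl]
  simp only [Polynomial.eval_mul, Polynomial.eval_pow, Polynomial.eval_sub,
    Polynomial.eval_add, Polynomial.eval_X, Polynomial.eval_C, Polynomial.eval_natCast,
    nsmul_eq_mul]
  have hcoeff : (l.choose k : ℝ) * (l.descFactorial (l - k)) * (l.descFactorial k)
      = (l.choose k : ℝ) ^ 2 * l.factorial := by
    rw [Nat.descFactorial_eq_factorial_mul_choose l (l - k),
      Nat.descFactorial_eq_factorial_mul_choose l k, Nat.choose_symm hkl,
      ← Nat.choose_mul_factorial_mul_factorial hkl]
    push_cast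
    ring
  have h2 : (2 : ℝ) ^ l = 2 ^ k * 2 ^ (l - k) := by rw [← pow_add, Nat.add_sub_cancel' hkl]
  rw [div_pow, div_pow, h2]
  field_simp
  linear_combination ((x - 1) ^ k * (x + 1) ^ (l - k)) * hcoeff

lemma continuous_legP (l : ℕ) : Continuous (legP l) := by
  rw [show legP l = _ from funext (legP_eq_sum l)]
  fun_prop

lemma legP_one_sub_two_mul (l : ℕ) (t : ℝ) :
    legP l (1 - 2 * t)
      = ∑ k ∈ range (l + 1), (l.choose k : ℝ) ^ 2 * (-t) ^ k * (1 - t) ^ (l - k) := by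
  rw [legP_eq_sum, show (1 - 2 * t - 1) / 2 = -t by ring, show (1 - 2 * t + 1) / 2 = 1 - t by ring]

lemma abs_one_sub_legP_one_sub_two_mul_le (l : ℕ) {t : ℝ} (ht0 : 0 ≤ t) (ht1 : t ≤ 1)
    (hlt : (l : ℝ) ^ 2 * t ≤ 1 / 4) :
    |1 - legP l (1 - 2 * t)| ≤ 3 * (l : ℝ) ^ 2 * t := by
  set x := (l : ℝ) ^ 2 * t with hx
  have hx0 : 0 ≤ x := by positivity
  have hl : (l : ℝ) ≤ (l : ℝ) ^ 2 := by exact_mod_cast Nat.le_self_pow two_ne_zero l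
  have hterm : ∀ k ∈ range l,
      |(l.choose (k + 1) : ℝ) ^ 2 * (-t) ^ (k + 1) * (1 - t) ^ (l - (k + 1))| ≤ x ^ (k + 1) := by
    intro k _
    have hchoose : (l.choose (k + 1) : ℝ) ≤ (l : ℝ) ^ (k + 1) := by
      exact_mod_cast Nat.choose_le_pow ..
    have hpow : |(1 - t) ^ (l - (k + 1))| ≤ 1 := by
      rw [abs_of_nonneg (by bound)]
      exact pow_le_one₀ (by linarith) (by linarith)
    calc _ = (l.choose (k + 1) : ℝ) ^ 2 * t ^ (k + 1) * |(1 - t) ^ (l - (k + 1))| := by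
          simp [abs_mul, abs_pow, abs_of_nonneg ht0]
      _ ≤ ((l : ℝ) ^ (k + 1)) ^ 2 * t ^ (k + 1) * 1 := by gcongr
      _ = x ^ (k + 1) := by ring
  have hfirst : |1 - (1 - t) ^ l| ≤ l * t := by
    rw [abs_of_nonneg (sub_nonneg.2 (pow_le_one₀ (by linarith) (by linarith)))]
    linarith [sub_eq_add_neg 1 t ▸ one_add_mul_le_pow (a := -t) (by linarith) l]
  have hrest : ∑ k ∈ range l, x ^ (k + 1) ≤ 2 * x := by
    have := geom_sum_Ico_le_of_lt_one (m := 1) (n := l + 1) hx0 (by linarith)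
    rw [Finset.sum_Ico_eq_sum_range] at this
    simp only [add_tsub_cancel_right, add_comm 1] at this
    calc _ ≤ x ^ 1 / (1 - x) := this
      _ ≤ 2 * x := by rw [div_le_iff₀ (by linarith)]; nlinarith
  rw [legP_one_sub_two_mul, Finset.sum_range_succ']
  simp only [Nat.choose_zero_right, Nat.cast_one, one_pow, pow_zero, Nat.sub_zero, one_mul]
  calc _ = |(1 - (1 - t) ^ l) - ∑ k ∈ range l,
        (l.choose (k + 1) : ℝ) ^ 2 * (-t) ^ (k + 1) * (1 - t) ^ (l - (k + 1))| := by
          congr 1; ring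
    _ ≤ |1 - (1 - t) ^ l| + ∑ k ∈ range l, x ^ (k + 1) :=
        (abs_sub _ _).trans (add_le_add le_rfl ((abs_sum_le_sum_abs _ _).trans (sum_le_sum hterm)))
    _ ≤ 3 * x := by nlinarith [mul_le_mul_of_nonneg_right hl ht0]
    _ = 3 * (l : ℝ) ^ 2 * t := by rw [hx]; ring

lemma abs_one_sub_legP_cos_le (l : ℕ) {θ : ℝ} (hlθ : l * |θ| ≤ 1) :
    |1 - legP l (cos θ)| ≤ (l : ℝ) ^ 2 * θ ^ 2 := by
  have hcos : cos θ = 1 - 2 * sin (θ / 2) ^ 2 := by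
    have h := cos_two_mul' (θ / 2)
    rw [mul_div_cancel₀ θ two_ne_zero, cos_sq'] at h
    linarith
  have hsin : sin (θ / 2) ^ 2 ≤ θ ^ 2 / 4 := by
    linarith [sin_sq_le_sq (x := θ / 2)]
  have hlθ2 : (l : ℝ) ^ 2 * θ ^ 2 ≤ 1 := by
    rw [← sq_abs θ, ← mul_pow]
    exact pow_le_one₀ (by positivity) hlθ
  rw [hcos]
  refine (abs_one_sub_legP_one_sub_two_mul_le l (sq_nonneg _) (sin_sq_le_one _) ?_).trans ?_
  · nlinarith [mul_le_mul_of_nonneg_left hsin (sq_nonneg (l : ℝ))]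
  · nlinarith [mul_le_mul_of_nonneg_left hsin (sq_nonneg (l : ℝ))]

lemma abs_exp_neg_sub_le {x : ℝ} (hx0 : 0 ≤ x) (hx1 : x ≤ 1) :
    |exp (-x) - (1 - x + x ^ 2 / 2)| ≤ 2 / 9 * x ^ 3 := by
  have h := Real.exp_bound (x := -x) (by rwa [abs_neg, abs_of_nonneg hx0]) (n := 3) (by norm_num)
  norm_num [Finset.sum_range_succ, Nat.factorial, abs_of_nonneg hx0, ← sub_eq_add_neg] at h
  linarith

lemma cos_le_exp_neg_sq_div_two {θ : ℝ} (hθ : |θ| ≤ 1) : cos θ ≤ exp (-θ ^ 2 / 2) := by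
  have hθ2 : θ ^ 2 ≤ 1 := (sq_le_one_iff_abs_le_one θ).2 hθ
  have hcos := (abs_le.1 (cos_bound hθ)).2
  rw [show |θ| ^ 4 = (θ ^ 2) ^ 2 by rw [← sq_abs θ, ← pow_mul]] at hcos
  have hexp := (abs_le.1 (abs_exp_neg_sub_le (x := θ ^ 2 / 2) (by positivity) (by linarith))).1
  rw [neg_div]
  nlinarith [mul_nonneg (sq_nonneg (θ ^ 2)) (sub_nonneg.2 hθ2)]

lemma exp_neg_sq_div_two_sub_cos_le {θ : ℝ} (hθ : |θ| ≤ 1) :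
    exp (-θ ^ 2 / 2) - cos θ ≤ θ ^ 4 / 4 := by
  have hθ2 : θ ^ 2 ≤ 1 := (sq_le_one_iff_abs_le_one θ).2 hθ
  have hexp := (abs_le.1 (abs_exp_neg_sub_le (x := θ ^ 2 / 2) (by positivity) (by linarith))).2
  rw [neg_div]
  nlinarith [one_sub_sq_div_two_le_cos (x := θ), mul_nonneg (sq_nonneg (θ ^ 2)) (sub_nonneg.2 hθ2)]

lemma abs_exp_sub_legP_mul_cos_pow_le (l N : ℕ) {θ : ℝ} (hθ : |θ| ≤ 1) (hlθ : l * |θ| ≤ 1) :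
    |exp (-(N * θ ^ 2) / 2) - legP l (cos θ) * cos θ ^ N|
      ≤ (N * θ ^ 4 / 2 + (l : ℝ) ^ 2 * θ ^ 2) * exp (-(N * θ ^ 2) / 2) := by
  set a := exp (-θ ^ 2 / 2)
  set c := cos θ
  have hθ2 : θ ^ 2 ≤ 1 := (sq_le_one_iff_abs_le_one θ).2 hθ
  have hc0 : 0 ≤ c := cos_nonneg_of_mem_Icc (abs_le.1 (hθ.trans (by linarith [pi_gt_three])))
  have hca : c ≤ a := cos_le_exp_neg_sq_div_two hθ
  have ha : 1 / 2 ≤ a := by linarith [add_one_le_exp (-θ ^ 2 / 2)]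
  have haN : exp (-(N * θ ^ 2) / 2) = a ^ N := by rw [← exp_nat_mul]; ring_nf
  have hpow : N * a ^ (N - 1) ≤ 2 * N * a ^ N := by
    rcases N with _ | M
    · simp
    · rw [Nat.add_sub_cancel, pow_succ]
      have : 0 ≤ ((M + 1 : ℕ) : ℝ) * a ^ M := by positivity
      nlinarith
  have hdiff : |a ^ N - c ^ N| ≤ N * θ ^ 4 / 2 * a ^ N := by
    calc |a ^ N - c ^ N| ≤ |a - c| * N * max |a| |c| ^ (N - 1) := abs_pow_sub_pow_le ..
      _ = (a - c) * (N * a ^ (N - 1)) := by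
        rw [abs_of_nonneg (sub_nonneg.2 hca), abs_of_nonneg hc0, abs_of_pos (by linarith),
          max_eq_left hca]
        ring
      _ ≤ θ ^ 4 / 4 * (2 * N * a ^ N) :=
        mul_le_mul (exp_neg_sq_div_two_sub_cos_le hθ) hpow (by positivity) (by positivity)
      _ = N * θ ^ 4 / 2 * a ^ N := by ring
  have hlegP : |(1 - legP l c) * c ^ N| ≤ (l : ℝ) ^ 2 * θ ^ 2 * a ^ N := by
    rw [abs_mul, abs_of_nonneg (by positivity : 0 ≤ c ^ N)]
    gcongr
    exact abs_one_sub_legP_cos_le l hlθ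
  rw [haN]
  calc _ = |(a ^ N - c ^ N) + (1 - legP l c) * c ^ N| := by ring_nf
    _ ≤ _ := (abs_add_le _ _).trans (add_le_add hdiff hlegP)
    _ = _ := by ring

lemma integral_Ioi_rpow_mul_comp_mul_sq (f : ℝ → ℝ) (q : ℝ) {ν : ℝ} (hν : 0 < ν) :
    ∫ x in Ioi 0, x ^ q * f (ν * x ^ 2) = ν ^ (-(q + 1) / 2) * ∫ x in Ioi 0, x ^ q * f (x ^ 2) := by
  have hb : 0 < √ν := sqrt_pos.2 hν
  have h := integral_comp_mul_left_Ioi (fun u => u ^ q * f (u ^ 2)) 0 hb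
  have hcongr : ∀ x ∈ Ioi (0 : ℝ),
      (√ν * x) ^ q * f ((√ν * x) ^ 2) = √ν ^ q * (x ^ q * f (ν * x ^ 2)) := fun x hx => by
    rw [mul_rpow hb.le (le_of_lt hx), mul_pow, sq_sqrt hν.le, mul_assoc]
  rw [mul_zero, smul_eq_mul, setIntegral_congr_fun measurableSet_Ioi hcongr,
    integral_const_mul] at h
  have hpow : ν ^ (-(q + 1) / 2) = (√ν ^ q)⁻¹ * (√ν)⁻¹ := by
    rw [← rpow_neg hb.le, ← rpow_neg_one, ← rpow_add hb, sqrt_eq_rpow, ← rpow_mul hν.le]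
    ring_nf
  rw [hpow, mul_assoc, ← h, inv_mul_cancel_left₀ (rpow_pos_of_pos hb q).ne']

lemma integrableOn_Ioi_rpow_mul_exp_neg_mul_sq_div_two {q ν : ℝ} (hq : -1 < q) (hν : 0 < ν) :
    IntegrableOn (fun x => x ^ q * exp (-(ν * x ^ 2) / 2)) (Ioi 0) := by
  convert integrableOn_rpow_mul_exp_neg_mul_sq (half_pos hν) hq using 4
  ring

lemma one_sub_exp_neg_mul_sq_div_two_nonneg {ν : ℝ} (hν : 0 ≤ ν) (θ : ℝ) :
    0 ≤ 1 - exp (-(ν * θ ^ 2) / 2) :=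
  sub_nonneg.2 (exp_le_one_iff.2 (by have := mul_nonneg hν (sq_nonneg θ); linarith))

lemma integrableOn_Ioi_rpow_mul_one_sub_exp {s ν : ℝ} (hs0 : 0 < s) (hs1 : s < 1) (hν : 0 ≤ ν) :
    IntegrableOn (fun θ => θ ^ (-2 * s - 1) * (1 - exp (-(ν * θ ^ 2) / 2))) (Ioi 0) := by
  have hmeas : Measurable fun θ : ℝ => θ ^ (-2 * s - 1) * (1 - exp (-(ν * θ ^ 2) / 2)) := by
    fun_prop
  have hbound : ∀ θ ∈ Ioi (0 : ℝ), ‖θ ^ (-2 * s - 1) * (1 - exp (-(ν * θ ^ 2) / 2))‖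
      ≤ θ ^ (-2 * s - 1) * min 1 (ν / 2 * θ ^ 2) := fun θ (hθ : 0 < θ) => by
    rw [norm_mul, norm_of_nonneg (rpow_nonneg hθ.le _),
      norm_of_nonneg (one_sub_exp_neg_mul_sq_div_two_nonneg hν θ)]
    gcongr
    exact le_min (by linarith [exp_pos (-(ν * θ ^ 2) / 2)])
      (by linarith [add_one_le_exp (-(ν * θ ^ 2) / 2)])
  rw [← Ioc_union_Ioi_eq_Ioi zero_le_one, integrableOn_union]
  constructor
  · refine Integrable.mono' (g := fun θ => ν / 2 * θ ^ (1 - 2 * s))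
      ((intervalIntegral.intervalIntegrable_rpow' (by linarith)).1.const_mul _)
      hmeas.aestronglyMeasurable ((ae_restrict_iff' measurableSet_Ioc).2
        (Eventually.of_forall fun θ hθ => (hbound θ hθ.1).trans ?_))
    rw [show 1 - 2 * s = -2 * s - 1 + (2 : ℕ) by push_cast; ring,
      rpow_add_natCast hθ.1.ne']
    nlinarith [min_le_right 1 (ν / 2 * θ ^ 2), rpow_nonneg (le_of_lt hθ.1) (-2 * s - 1)]
  · refine Integrable.mono' (g := fun θ => θ ^ (-2 * s - 1))
      (integrableOn_Ioi_rpow_of_lt (by linarith) one_pos) hmeas.aestronglyMeasurable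
      ((ae_restrict_iff' measurableSet_Ioi).2
        (Eventually.of_forall fun θ hθ => (hbound θ (mem_Ioi.2 (one_pos.trans hθ))).trans ?_))
    nlinarith [min_le_left 1 (ν / 2 * θ ^ 2), rpow_nonneg (one_pos.trans hθ).le (-2 * s - 1)]

lemma setIntegral_Ioi_rpow_mul_one_sub_exp_le {s ν a : ℝ} (hs0 : 0 < s) (hν : 0 ≤ ν) (ha : 0 < a) :
    ∫ θ in Ioi a, θ ^ (-2 * s - 1) * (1 - exp (-(ν * θ ^ 2) / 2)) ≤ a ^ (-2 * s) / (2 * s) := by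
  have hpos : ∀ θ ∈ Ioi a, 0 ≤ θ ^ (-2 * s - 1) := fun θ hθ => rpow_nonneg (ha.trans hθ).le _
  calc _ ≤ ∫ θ in Ioi a, θ ^ (-2 * s - 1) :=
        setIntegral_mono_of_nonneg
          (fun θ hθ => mul_nonneg (hpos θ hθ) (one_sub_exp_neg_mul_sq_div_two_nonneg hν θ))
          (fun θ hθ => mul_le_of_le_one_right (hpos θ hθ)
            (by linarith [exp_pos (-(ν * θ ^ 2) / 2)]))
          (integrableOn_Ioi_rpow_of_lt (by linarith) ha)
    _ = a ^ (-2 * s) / (2 * s) := by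
      rw [integral_Ioi_rpow_of_lt (by linarith) ha, show -2 * s - 1 + 1 = -2 * s by ring,
        neg_div, ← div_neg, neg_mul, neg_neg]

noncomputable def gaussMoment (q : ℝ) : ℝ := ∫ x in Ioi 0, x ^ q * exp (-x ^ 2 / 2)

lemma integral_Ioi_rpow_mul_exp_neg_mul_sq_div_two (q : ℝ) {ν : ℝ} (hν : 0 < ν) :
    ∫ x in Ioi 0, x ^ q * exp (-(ν * x ^ 2) / 2) = ν ^ (-(q + 1) / 2) * gaussMoment q :=
  integral_Ioi_rpow_mul_comp_mul_sq (fun y => exp (-y / 2)) q hν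

lemma gaussMoment_nonneg (q : ℝ) : 0 ≤ gaussMoment q :=
  setIntegral_nonneg measurableSet_Ioi fun x (hx : 0 < x) => by positivity

/-- `θ^{-2s-1} (Nθ⁴/2 + l²θ²) e^{-Nθ²/2}`, written as a combination of Gaussian-moment
integrands. -/
noncomputable def gapMajorant (s : ℝ) (l N : ℕ) (θ : ℝ) : ℝ :=
  N / 2 * (θ ^ (3 - 2 * s) * exp (-(N * θ ^ 2) / 2))
    + (l : ℝ) ^ 2 * (θ ^ (1 - 2 * s) * exp (-(N * θ ^ 2) / 2))

noncomputable def legendreGap (s : ℝ) (l N : ℕ) (θ : ℝ) : ℝ :=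
  θ ^ (-2 * s - 1) * (exp (-(N * θ ^ 2) / 2) - legP l (cos θ) * cos θ ^ N)

section

variable {s : ℝ} (l N : ℕ)

lemma abs_legendreGap_le {θ : ℝ} (hθ : θ ∈ Ioc 0 (1 / ((l : ℝ) + 2))) :
    |legendreGap s l N θ| ≤ gapMajorant s l N θ := by
  obtain ⟨hθ0, hθa⟩ := hθ
  rw [le_div_iff₀ (by positivity)] at hθa
  have hpow : ∀ k : ℕ, θ ^ (-2 * s - 1 + k) = θ ^ (-2 * s - 1) * θ ^ k :=
    rpow_add_natCast hθ0.ne' _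
  rw [legendreGap, gapMajorant, abs_mul, abs_of_nonneg (rpow_nonneg hθ0.le _),
    show 3 - 2 * s = -2 * s - 1 + (4 : ℕ) by push_cast; ring,
    show 1 - 2 * s = -2 * s - 1 + (2 : ℕ) by push_cast; ring, hpow, hpow]
  have := abs_exp_sub_legP_mul_cos_pow_le l N (θ := θ) (by rw [abs_of_pos hθ0]; nlinarith)
    (by rw [abs_of_pos hθ0]; nlinarith)
  calc _ ≤ θ ^ (-2 * s - 1) * ((N * θ ^ 4 / 2 + (l : ℝ) ^ 2 * θ ^ 2) * exp (-(N * θ ^ 2) / 2)) :=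
        mul_le_mul_of_nonneg_left this (rpow_nonneg hθ0.le _)
    _ = _ := by ring

lemma integrableOn_Ioi_gapMajorant (hs1 : s < 1) (hN : 0 < N) :
    IntegrableOn (gapMajorant s l N) (Ioi 0) :=
  have hN' : (0 : ℝ) < N := Nat.cast_pos.2 hN
  ((integrableOn_Ioi_rpow_mul_exp_neg_mul_sq_div_two (by linarith) hN').const_mul _).add
    ((integrableOn_Ioi_rpow_mul_exp_neg_mul_sq_div_two (by linarith) hN').const_mul _)

lemma integral_Ioi_gapMajorant (hs1 : s < 1) (hN : 0 < N) :
    ∫ θ in Ioi 0, gapMajorant s l N θ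
      = (N : ℝ) ^ (s - 1) * (gaussMoment (3 - 2 * s) / 2 + l ^ 2 * gaussMoment (1 - 2 * s)) := by
  have hN' : (0 : ℝ) < N := Nat.cast_pos.2 hN
  simp only [gapMajorant]
  rw [integral_add
      ((integrableOn_Ioi_rpow_mul_exp_neg_mul_sq_div_two (by linarith) hN').const_mul _)
      ((integrableOn_Ioi_rpow_mul_exp_neg_mul_sq_div_two (by linarith) hN').const_mul _),
    integral_const_mul, integral_const_mul, integral_Ioi_rpow_mul_exp_neg_mul_sq_div_two _ hN',
    integral_Ioi_rpow_mul_exp_neg_mul_sq_div_two _ hN',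
    show -(3 - 2 * s + 1) / 2 = (s - 1) - 1 by ring, show -(1 - 2 * s + 1) / 2 = s - 1 by ring,
    rpow_sub_one hN'.ne']
  field_simp

lemma integrableOn_Ioc_legendreGap (hs1 : s < 1) (hN : 0 < N) :
    IntegrableOn (legendreGap s l N) (Ioc 0 (1 / ((l : ℝ) + 2))) := by
  refine Integrable.mono' ((integrableOn_Ioi_gapMajorant l N hs1 hN).mono_set Ioc_subset_Ioi_self)
    ?_ ((ae_restrict_iff' measurableSet_Ioc).2
      (Eventually.of_forall fun _ => abs_legendreGap_le l N))
  have := continuous_legP l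
  exact (ContinuousOn.mul (continuousOn_id.rpow_const fun θ hθ => Or.inl hθ.1.ne')
    (by fun_prop)).aestronglyMeasurable measurableSet_Ioc

lemma abs_setIntegral_Ioc_legendreGap_le (hs1 : s < 1) (hN : 0 < N) :
    |∫ θ in Ioc 0 (1 / ((l : ℝ) + 2)), legendreGap s l N θ|
      ≤ (N : ℝ) ^ (s - 1) * (gaussMoment (3 - 2 * s) / 2 + l ^ 2 * gaussMoment (1 - 2 * s)) := by
  have hD := integrableOn_Ioi_gapMajorant l N hs1 hN
  rw [← integral_Ioi_gapMajorant l N hs1 hN]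
  calc _ ≤ ∫ θ in Ioc 0 (1 / ((l : ℝ) + 2)), |legendreGap s l N θ| :=
        abs_integral_le_integral_abs
    _ ≤ ∫ θ in Ioc 0 (1 / ((l : ℝ) + 2)), gapMajorant s l N θ :=
        setIntegral_mono_on (integrableOn_Ioc_legendreGap l N hs1 hN).abs
          (hD.mono_set Ioc_subset_Ioi_self) measurableSet_Ioc fun _ => abs_legendreGap_le l N
    _ ≤ ∫ θ in Ioi 0, gapMajorant s l N θ :=
        setIntegral_mono_set hD ((ae_restrict_iff' measurableSet_Ioi).2
          (Eventually.of_forall fun θ (hθ : 0 < θ) => by rw [gapMajorant]; positivity))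
          Ioc_subset_Ioi_self.eventuallyLE

end

lemma abs_lam2B_sub_le {s : ℝ} (hs0 : 0 < s) (hs1 : s < 1) (n l : ℕ) (hN : 0 < 2 * n + l) :
    |lam2B s n l - ((2 * n + l : ℕ) : ℝ) ^ s
        * ∫ θ in Ioi (0 : ℝ), θ ^ (-2 * s - 1) * (1 - exp (-θ ^ 2 / 2))|
      ≤ ((2 * n + l : ℕ) : ℝ) ^ (s - 1)
          * (gaussMoment (3 - 2 * s) / 2 + l ^ 2 * gaussMoment (1 - 2 * s))
        + ((l : ℝ) + 2) ^ (2 * s) / (2 * s) := by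
  set N := 2 * n + l
  set a := 1 / ((l : ℝ) + 2) with ha_def
  have ha : 0 < a := by positivity
  have hN' : (0 : ℝ) < N := Nat.cast_pos.2 hN
  set G := fun θ : ℝ => θ ^ (-2 * s - 1) * (1 - exp (-(N * θ ^ 2) / 2))
  have hG := integrableOn_Ioi_rpow_mul_one_sub_exp hs0 hs1 hN'.le
  have hlam : lam2B s n l = (∫ θ in Ioc 0 a, G θ) + ∫ θ in Ioc 0 a, legendreGap s l N θ := by
    rw [lam2B, intervalIntegral.integral_of_le ha.le,
      ← integral_add (hG.mono_set Ioc_subset_Ioi_self) (integrableOn_Ioc_legendreGap l N hs1 hN)]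
    congr 1 with θ
    rw [legendreGap]
    ring
  have hI : (N : ℝ) ^ s * ∫ θ in Ioi (0 : ℝ), θ ^ (-2 * s - 1) * (1 - exp (-θ ^ 2 / 2))
      = (∫ θ in Ioc 0 a, G θ) + ∫ θ in Ioi a, G θ := by
    rw [← setIntegral_union Ioc_disjoint_Ioi_same measurableSet_Ioi
        (hG.mono_set Ioc_subset_Ioi_self) (hG.mono_set (Ioi_subset_Ioi ha.le)),
      Ioc_union_Ioi_eq_Ioi ha.le]
    have := integral_Ioi_rpow_mul_comp_mul_sq (fun y => 1 - exp (-y / 2)) (-2 * s - 1) hN'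
    rw [show -(-2 * s - 1 + 1) / 2 = s by ring] at this
    exact this.symm
  have htail := setIntegral_Ioi_rpow_mul_one_sub_exp_le hs0 hN'.le ha
  rw [show a ^ (-2 * s) = ((l : ℝ) + 2) ^ (2 * s) by rw [ha_def, one_div,
    inv_rpow (by positivity), ← rpow_neg (by positivity), neg_mul, neg_neg]] at htail
  have htail0 : 0 ≤ ∫ θ in Ioi a, G θ := setIntegral_nonneg measurableSet_Ioi fun θ hθ =>
    mul_nonneg (rpow_nonneg (ha.trans hθ).le _) (one_sub_exp_neg_mul_sq_div_two_nonneg hN'.le θ)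
  rw [hlam, hI]
  calc _ = |(∫ θ in Ioc 0 a, legendreGap s l N θ) - ∫ θ in Ioi a, G θ| := by ring_nf
    _ ≤ _ := (abs_sub _ _).trans (add_le_add (abs_setIntegral_Ioc_legendreGap_le l N hs1 hN)
        (by rwa [abs_of_nonneg htail0]))

lemma abs_lam2B_div_sub_le {s : ℝ} (hs0 : 0 < s) (hs1 : s < 1) (n l : ℕ) (hN : 0 < 2 * n + l) :
    |lam2B s n l / ((2 * n + l : ℕ) : ℝ) ^ s
        - ∫ θ in Ioi (0 : ℝ), θ ^ (-2 * s - 1) * (1 - exp (-θ ^ 2 / 2))|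
      ≤ (gaussMoment (3 - 2 * s) / 2 + gaussMoment (1 - 2 * s))
          * (((l : ℝ) + 2) ^ 2 / (2 * n + l : ℕ))
        + (((l : ℝ) + 2) ^ 2 / (2 * n + l : ℕ)) ^ s / (2 * s) := by
  set N : ℝ := ((2 * n + l : ℕ) : ℝ)
  have hN' : 0 < N := Nat.cast_pos.2 hN
  have hNs : 0 < N ^ s := rpow_pos_of_pos hN' s
  have hl : (l : ℝ) ^ 2 ≤ ((l : ℝ) + 2) ^ 2 := by gcongr; linarith
  have hl1 : 1 ≤ ((l : ℝ) + 2) ^ 2 := by nlinarith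
  have hM3 := gaussMoment_nonneg (3 - 2 * s)
  have hM1 := gaussMoment_nonneg (1 - 2 * s)
  rw [div_sub' hNs.ne', abs_div, abs_of_pos hNs, div_le_iff₀ hNs, add_mul,
    div_rpow (by positivity) hN'.le, ← rpow_natCast_mul (by positivity)]
  refine (abs_lam2B_sub_le hs0 hs1 n l hN).trans (add_le_add ?_ ?_)
  · rw [rpow_sub_one hN'.ne']
    calc _ ≤ N ^ s / N * ((gaussMoment (3 - 2 * s) / 2 + gaussMoment (1 - 2 * s))
          * ((l : ℝ) + 2) ^ 2) := by gcongr; nlinarith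
      _ = _ := by ring
  · exact le_of_eq (by field_simp; norm_num [mul_comm])

theorem lam2B_asymptotic (s : ℝ) (hs0 : 0 < s) (hs1 : s < 1) :
    ∀ ε : ℝ, 0 < ε → ∃ R : ℝ, 0 < R ∧ ∀ n l : ℕ,
      R ≤ Real.sqrt ((2 * n + l : ℕ) : ℝ) / ((l : ℝ) + 2) →
      |lam2B s n l / ((2 * n + l : ℕ) : ℝ) ^ s
          - ∫ θ in Set.Ioi (0:ℝ), θ ^ (-2 * s - 1) * (1 - Real.exp (-θ ^ 2 / 2))| ≤ ε := by
  intro ε hε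
  set K := gaussMoment (3 - 2 * s) / 2 + gaussMoment (1 - 2 * s)
  have hK : 0 ≤ K :=
    add_nonneg (div_nonneg (gaussMoment_nonneg _) two_pos.le) (gaussMoment_nonneg _)
  set g : ℝ → ℝ := fun x => K * x + x ^ s / (2 * s)
  have hg : Tendsto (fun R : ℝ => g (R ^ 2)⁻¹) atTop (𝓝 0) := by
    have hcont : Continuous g :=
      (continuous_const.mul continuous_id).add ((continuous_rpow_const hs0.le).div_const _)
    simpa [g, zero_rpow hs0.ne', Function.comp_def] using
      (hcont.tendsto 0).comp (tendsto_inv_atTop_zero.comp (tendsto_pow_atTop two_ne_zero))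
  obtain ⟨R, hRε, hR⟩ := ((hg.eventually (ge_mem_nhds hε)).and (eventually_gt_atTop 0)).exists
  refine ⟨R, hR, fun n l hRnl => ?_⟩
  rw [le_div_iff₀ (by positivity)] at hRnl
  have hN : 0 < 2 * n + l := Nat.cast_pos.1 (sqrt_pos.1 (lt_of_lt_of_le (by positivity) hRnl))
  have hN' : (0 : ℝ) < (2 * n + l : ℕ) := Nat.cast_pos.2 hN
  have hx : ((l : ℝ) + 2) ^ 2 / (2 * n + l : ℕ) ≤ (R ^ 2)⁻¹ := by
    rw [div_le_iff₀ hN', inv_mul_eq_div, le_div_iff₀ (by positivity)]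
    nlinarith [sq_sqrt hN'.le, mul_self_le_mul_self (by positivity) hRnl]
  calc _ ≤ g (((l : ℝ) + 2) ^ 2 / (2 * n + l : ℕ)) := abs_lam2B_div_sub_le hs0 hs1 n l hN
    _ ≤ g (R ^ 2)⁻¹ := by simp only [g]; gcongr
    _ ≤ ε := hRε
end

section
/- There exists a positive constant c > 0 such that for all integers n, l ≥ 0, c·l^{2s} ≤ λ_{3,B}(n,l) ≤ c⁻¹·(1+l)^{2s}. -/
open MeasureTheory Real

/-- The term `λ_{3,B}(n,l)` in the splitting of the Boltzmann eigenvalues. -/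
noncomputable def lam3B (s : ℝ) (n l : ℕ) : ℝ :=
  ∫ θ in (1 / ((l : ℝ) + 2))..(Real.pi / 4),
    θ ^ (-2 * s - 1) * (1 - legP l (Real.cos θ) * (Real.cos θ) ^ (2 * n + l))

/-!
Write `P_l` as a polynomial. Its `k`-th derivative solves a Legendre-type ODE (`LegendreODE`)
along which the energy `μ f² + (1 - x²) f'²` is nondecreasing on `[0, 1]`. Hence `|P_l| ≤ 1` and
`|P_l''| ≤ P_l''(1)` there, and Taylor's theorem at `1` gives
`P_l(x) ≤ (1 - l (l + 1) (1 - x) / 4)²` for `l ≥ 3`.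

The factor `1 - P_l(cos θ) cos^(2n+l) θ` therefore lies in `[0, 2]`, so `λ` is at most
`∫_{1/(l+2)}^∞ 2 θ^(-2s-1) dθ = (l + 2)^(2s) / s`. For `l ≥ 3` the factor is at least `1/20` on
`[1/l, 2/l]`, and integrating `θ^(-2s-1)` over that window gives a multiple of `l^(2s)`. For
`l = 1, 2` the factor is at least `1 - cos θ`, so `λ` is bounded below by a positive constant.
-/

open Polynomial Set

namespace Polynomial

theorem iteratedDeriv_eval_s5 {𝕜 : Type*} [NontriviallyNormedField 𝕜] (n : ℕ) (p : 𝕜[X]) :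
    iteratedDeriv n (fun x => p.eval x) = fun x => (derivative^[n] p).eval x := by
  induction n generalizing p with
  | zero => rfl
  | succ n ih =>
    rw [iteratedDeriv_succ', Function.iterate_succ_apply, ← ih]
    congr 1
    funext x
    exact Polynomial.deriv p

theorem eval_le_of_derivative_derivative_le {f : ℝ[X]} {M x b : ℝ} (hxb : x ≤ b)
    (hM : ∀ t ∈ Icc x b, (derivative (derivative f)).eval t ≤ M) :
    f.eval x ≤ f.eval b + (derivative f).eval b * (x - b) + M / 2 * (x - b) ^ 2 := by
  rcases hxb.eq_or_lt with rfl | hxb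
  · simp
  obtain ⟨t, ht, hrem⟩ := taylor_mean_remainder_lagrange_iteratedDeriv (n := 1) hxb.ne'
    (f := fun y => f.eval y)
    (by simpa [coe_aeval_eq_eval] using (contDiff_aeval (𝕜 := ℝ) f (1 + 1)).contDiffOn)
  have hderiv : derivWithin (fun y => f.eval y) (uIcc b x) b = (derivative f).eval b := by
    rw [(Polynomial.differentiableAt f).derivWithin (uniqueDiffOn_uIcc hxb.ne' b left_mem_uIcc),
      Polynomial.deriv]
  rw [iteratedDeriv_eval_s5, taylor_within_apply] at hrem
  simp only [Finset.sum_range_succ, Finset.sum_range_zero, iteratedDerivWithin_zero,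
    iteratedDerivWithin_one, hderiv, smul_eq_mul] at hrem
  have ht' : t ∈ Icc x b := by
    rw [uIoo_of_ge hxb.le] at ht
    exact Ioo_subset_Icc_self ht
  simp only [Function.iterate_succ, Function.iterate_zero, Function.comp_apply, id] at hrem
  nlinarith [mul_le_mul_of_nonneg_right (hM t ht') (sq_nonneg (x - b))]

end Polynomial

theorem X_sq_sub_one_mul_iterate_derivative (l m : ℕ) :
    (X ^ 2 - 1 : ℝ[X]) * derivative^[m + 2] ((X ^ 2 - 1) ^ l) =
      (2 * l - 2 * m - 2 : ℝ[X]) * X * derivative^[m + 1] ((X ^ 2 - 1) ^ l)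
        + ((m + 1) * (2 * l - m) : ℝ[X]) * derivative^[m] ((X ^ 2 - 1) ^ l) := by
  set u : ℝ[X] := (X ^ 2 - 1) ^ l
  have hu : (X ^ 2 - 1 : ℝ[X]) * derivative u = (2 * l : ℝ[X]) * X * u := by
    rcases l with _ | k
    · simp [u]
    · simp only [u, derivative_pow, derivative_sub, derivative_one, derivative_X, C_eq_natCast]
      push_cast
      ring
  induction m with
  | zero =>
    have h := congrArg derivative hu
    simp only [derivative_mul, derivative_sub, derivative_X_pow, derivative_one, derivative_X,
      derivative_ofNat, derivative_natCast, Nat.cast_ofNat, map_ofNat] at h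
    simp only [Function.iterate_succ_apply', Function.iterate_zero_apply]
    push_cast at h ⊢
    linear_combination h
  | succ m ih =>
    have h := congrArg derivative ih
    simp only [derivative_mul, derivative_add, derivative_sub, derivative_X_pow, derivative_one,
      derivative_X, derivative_ofNat, derivative_natCast, Nat.cast_ofNat, map_ofNat,
      ← Function.iterate_succ_apply' (f := derivative)] at h
    push_cast at h ⊢
    linear_combination h

/-- The ODE `(1 - x²) f'' = 2 (k + 1) x f' - μ f` satisfied by the `k`-th derivative of the
Legendre polynomial of degree `l`, with `μ = l (l + 1) - k (k + 1)`. -/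
def LegendreODE (k : ℕ) (μ : ℝ) (f : ℝ[X]) : Prop :=
  (1 - X ^ 2) * derivative (derivative f) = (2 * k + 2 : ℝ[X]) * X * derivative f - C μ * f

namespace LegendreODE

variable {k : ℕ} {μ : ℝ} {f : ℝ[X]}

theorem derivative (h : LegendreODE k μ f) :
    LegendreODE (k + 1) (μ - (2 * k + 2)) (Polynomial.derivative f) := by
  have hd := congrArg Polynomial.derivative h
  simp only [derivative_mul, derivative_sub, derivative_add, derivative_one, derivative_X,
    derivative_X_pow, derivative_natCast, derivative_ofNat, derivative_C, Nat.cast_ofNat,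
    map_ofNat] at hd
  unfold LegendreODE
  simp only [map_sub, map_add, map_mul, map_natCast, map_ofNat]
  push_cast at hd ⊢
  linear_combination hd

theorem eval_derivative_one (h : LegendreODE k μ f) :
    (Polynomial.derivative f).eval 1 = μ / (2 * k + 2) * f.eval 1 := by
  have h1 := congrArg (eval 1) h
  simp only [eval_mul, eval_sub, eval_add, eval_one, eval_pow, eval_X, eval_natCast, eval_C,
    eval_ofNat] at h1
  field_simp
  linarith

/-- The energy `μ f² + (1 - x²) f'²` is nondecreasing on `[0, 1]` and equals `μ f(1)²` at `1`.
-/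
theorem abs_eval_le_abs_eval_one (h : LegendreODE k μ f) (hμ : 0 < μ) {x : ℝ}
    (hx : x ∈ Icc (0 : ℝ) 1) : |f.eval x| ≤ |f.eval 1| := by
  set E : ℝ[X] := C μ * f ^ 2 + (1 - X ^ 2) * Polynomial.derivative f ^ 2
  have hE : Polynomial.derivative E = (4 * k + 2 : ℝ[X]) * X * Polynomial.derivative f ^ 2 := by
    unfold LegendreODE at h
    simp only [E, derivative_add, derivative_mul, derivative_C, derivative_pow, derivative_sub,
      derivative_one, derivative_X, Nat.cast_ofNat, map_ofNat]
    linear_combination (2 * Polynomial.derivative f) * h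
  have hmono : MonotoneOn (fun t => E.eval t) (Icc 0 1) := by
    refine monotoneOn_of_deriv_nonneg (convex_Icc 0 1) E.continuousOn E.differentiableOn ?_
    intro t ht
    rw [interior_Icc] at ht
    rw [Polynomial.deriv, hE]
    simp only [eval_mul, eval_add, eval_natCast, eval_ofNat, eval_X, eval_pow]
    have := ht.1.le
    positivity
  have hEx : μ * f.eval x ^ 2 ≤ E.eval x := by
    have : 0 ≤ (1 - x ^ 2) * (Polynomial.derivative f).eval x ^ 2 :=
      mul_nonneg (by nlinarith [hx.1, hx.2]) (sq_nonneg _)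
    simpa [E] using this
  have hE1 : E.eval 1 = μ * f.eval 1 ^ 2 := by simp [E]
  have hsq : μ * f.eval x ^ 2 ≤ μ * f.eval 1 ^ 2 :=
    hEx.trans ((hmono hx (right_mem_Icc.2 zero_le_one) hx.2).trans hE1.le)
  exact sq_le_sq.1 (le_of_mul_le_mul_left hsq hμ)

end LegendreODE

theorem iterate_derivative_X_sq_sub_one_pow_eval_one (l : ℕ) :
    (derivative^[l] ((X ^ 2 - 1) ^ l : ℝ[X])).eval 1 = l.factorial * 2 ^ l := by
  have htaylor : taylor 1 ((X ^ 2 - 1) ^ l : ℝ[X]) = X ^ l * (X + 2) ^ l := by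
    rw [taylor_apply, pow_comp, sub_comp, pow_comp, X_comp, one_comp, ← mul_pow]
    congr 1
    rw [C_1]
    ring
  rw [← factorial_smul_hasseDeriv, LinearMap.smul_apply, eval_smul, ← taylor_coeff, htaylor,
    coeff_X_pow_mul', if_pos le_rfl, Nat.sub_self, coeff_zero_eq_eval_zero, nsmul_eq_mul]
  simp

noncomputable def legendrePoly (l : ℕ) : ℝ[X] :=
  C (2 ^ l * l.factorial : ℝ)⁻¹ * derivative^[l] ((X ^ 2 - 1) ^ l)

theorem legP_eq_eval_legendrePoly (l : ℕ) (x : ℝ) : legP l x = (legendrePoly l).eval x := by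
  have h : (fun y : ℝ => (y ^ 2 - 1) ^ l) = fun y => ((X ^ 2 - 1) ^ l : ℝ[X]).eval y := by
    simp
  rw [legP, h, iteratedDeriv_eval_s5, legendrePoly, eval_mul, eval_C, one_div]

theorem legendrePoly_eval_one (l : ℕ) : (legendrePoly l).eval 1 = 1 := by
  rw [legendrePoly, eval_mul, eval_C, iterate_derivative_X_sq_sub_one_pow_eval_one]
  field_simp

theorem legendreODE_legendrePoly (l : ℕ) : LegendreODE 0 (l * (l + 1)) (legendrePoly l) := by
  have h := X_sq_sub_one_mul_iterate_derivative l l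
  simp only [Function.iterate_succ_apply'] at h
  unfold LegendreODE legendrePoly
  simp only [derivative_mul, derivative_C, zero_mul, zero_add, map_mul, map_add, map_natCast,
    map_one]
  push_cast
  linear_combination -C (2 ^ l * l.factorial : ℝ)⁻¹ * h

theorem abs_legP_le_one (l : ℕ) {x : ℝ} (hx : x ∈ Icc (0 : ℝ) 1) : |legP l x| ≤ 1 := by
  rw [legP_eq_eval_legendrePoly]
  rcases l with _ | k
  · simp [legendrePoly]
  · have h := (legendreODE_legendrePoly (k + 1)).abs_eval_le_abs_eval_one (by positivity) hx
    rwa [legendrePoly_eval_one, abs_one] at h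

/-- Second-order Taylor expansion at `1`, using `P'(1) = μ/2` and `max |P''| = P''(1)`. -/
theorem legP_le_sq {l : ℕ} (hl : 3 ≤ l) {x : ℝ} (hx : x ∈ Icc (0 : ℝ) 1) :
    legP l x ≤ (1 - l * (l + 1) * (1 - x) / 4) ^ 2 := by
  set μ : ℝ := l * (l + 1)
  have hμ : 12 ≤ μ := by
    have : (3 : ℝ) ≤ l := by exact_mod_cast hl
    nlinarith
  set P := legendrePoly l
  have hP0 : P.eval 1 = 1 := legendrePoly_eval_one l
  have h0 : LegendreODE 0 μ P := legendreODE_legendrePoly l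
  have h1 := h0.derivative
  have h2 := h1.derivative
  have hP1 : (derivative P).eval 1 = μ / 2 := by
    simpa [hP0] using h0.eval_derivative_one
  have hP2 : (derivative (derivative P)).eval 1 = μ * (μ - 2) / 8 := by
    rw [h1.eval_derivative_one, hP1]
    push_cast
    ring
  have hM : ∀ t ∈ Icc x 1, (derivative (derivative P)).eval t ≤ μ * (μ - 2) / 8 := by
    intro t ht
    have := h2.abs_eval_le_abs_eval_one (by push_cast; linarith) ⟨hx.1.trans ht.1, ht.2⟩
    rw [hP2, abs_of_nonneg (a := μ * (μ - 2) / 8) (by nlinarith)] at this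
    exact (le_abs_self _).trans this
  have htaylor := eval_le_of_derivative_derivative_le hx.2 hM
  rw [hP0, hP1] at htaylor
  rw [legP_eq_eval_legendrePoly]
  nlinarith [sq_nonneg (x - 1)]

theorem cos_mem_Icc_of_mem_Icc {θ : ℝ} (hθ : θ ∈ Icc (-(π / 2)) (π / 2)) :
    cos θ ∈ Icc (0 : ℝ) 1 :=
  ⟨cos_nonneg_of_mem_Icc hθ, cos_le_one θ⟩

theorem sq_div_five_le_one_sub_cos {θ : ℝ} (hθ : |θ| ≤ π) : θ ^ 2 / 5 ≤ 1 - cos θ := by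
  have hcos := cos_le_one_sub_mul_cos_sq hθ
  have hπ : 1 / 5 ≤ 2 / π ^ 2 := by
    rw [div_le_div_iff₀ (by norm_num) (by positivity)]
    nlinarith [pi_lt_d2, pi_pos]
  nlinarith [sq_nonneg θ]

theorem legP_cos_le {l : ℕ} (hl : 3 ≤ l) {θ : ℝ} (hθ : θ ∈ Icc (1 / (l : ℝ)) (2 / l)) :
    legP l (cos θ) ≤ 19 / 20 := by
  have hl3 : (3 : ℝ) ≤ l := by exact_mod_cast hl
  have hlθ : l * θ ∈ Icc (1 : ℝ) 2 := by
    constructor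
    · rw [← div_le_iff₀' (by positivity)]; exact hθ.1
    · rw [← le_div_iff₀' (by positivity)]; exact hθ.2
  have hθ0 : 0 ≤ θ := by nlinarith [hlθ.1]
  have hθπ : θ ≤ π / 2 := by nlinarith [hlθ.2, pi_gt_three]
  have hcos := cos_mem_Icc_of_mem_Icc ⟨by linarith [pi_pos], hθπ⟩
  have hd_lower : θ ^ 2 / 5 ≤ 1 - cos θ :=
    sq_div_five_le_one_sub_cos (by rw [abs_of_nonneg hθ0]; linarith [pi_pos])
  have hd_upper : 1 - cos θ ≤ θ ^ 2 / 2 := by linarith [one_sub_sq_div_two_le_cos (x := θ)]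
  set u : ℝ := l * (l + 1) * (1 - cos θ)
  have hu_lower : 1 / 5 ≤ u := by
    have : (l : ℝ) ^ 2 * (θ ^ 2 / 5) ≤ u := by
      apply mul_le_mul (by nlinarith) hd_lower (by positivity) (by positivity)
    nlinarith [hlθ.1]
  have hu_upper : u ≤ 4 := by
    have : u ≤ 4 / 3 * l ^ 2 * (θ ^ 2 / 2) :=
      mul_le_mul (by nlinarith) hd_upper (by linarith [hcos.2]) (by positivity)
    have : (l * θ) ^ 2 ≤ 2 ^ 2 := pow_le_pow_left₀ (by linarith [hlθ.1]) hlθ.2 2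
    nlinarith
  calc legP l (cos θ) ≤ (1 - u / 4) ^ 2 := legP_le_sq hl hcos
    _ ≤ (19 / 20) ^ 2 := by gcongr <;> linarith
    _ ≤ 19 / 20 := by norm_num

theorem integral_rpow_neg_two_mul_sub_one {s a b : ℝ} (hs : s ≠ 0) (ha : 0 < a)
    (hab : a ≤ b) :
    ∫ θ in a..b, θ ^ (-2 * s - 1) = (a ^ (-2 * s) - b ^ (-2 * s)) / (2 * s) := by
  have h0 : (0 : ℝ) ∉ uIcc a b := by
    rw [uIcc_of_le hab]
    exact fun h => ha.not_ge h.1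
  rw [integral_rpow (Or.inr ⟨by intro h; apply hs; linarith, h0⟩),
    show -2 * s - 1 + 1 = -2 * s by ring]
  field_simp
  ring

noncomputable def lam3BFactor (n l : ℕ) (θ : ℝ) : ℝ :=
  1 - legP l (cos θ) * cos θ ^ (2 * n + l)

theorem lam3B_eq_integral (s : ℝ) (n l : ℕ) :
    lam3B s n l =
      ∫ θ in (1 / ((l : ℝ) + 2))..(π / 4), θ ^ (-2 * s - 1) * lam3BFactor n l θ :=
  rfl

theorem continuous_lam3BFactor (n l : ℕ) : Continuous (lam3BFactor n l) := by
  have hP : legP l = fun x => (legendrePoly l).eval x := funext (legP_eq_eval_legendrePoly l)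
  unfold lam3BFactor
  rw [hP]
  fun_prop

theorem lam3BFactor_mem_Icc (n l : ℕ) {θ : ℝ} (hθ : θ ∈ Icc (-(π / 2)) (π / 2)) :
    lam3BFactor n l θ ∈ Icc (0 : ℝ) 2 := by
  have hc := cos_mem_Icc_of_mem_Icc hθ
  have h : |legP l (cos θ) * cos θ ^ (2 * n + l)| ≤ 1 := by
    rw [abs_mul, abs_pow, abs_of_nonneg hc.1]
    exact mul_le_one₀ (abs_legP_le_one l hc) (pow_nonneg hc.1 _) (pow_le_one₀ hc.1 hc.2)
  rw [abs_le] at h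
  exact ⟨by unfold lam3BFactor; linarith, by unfold lam3BFactor; linarith⟩

theorem one_sub_cos_le_lam3BFactor (n : ℕ) {l : ℕ} (hl : 1 ≤ l) {θ : ℝ}
    (hθ : θ ∈ Icc (-(π / 2)) (π / 2)) :
    1 - cos θ ≤ lam3BFactor n l θ := by
  have hc := cos_mem_Icc_of_mem_Icc hθ
  have hP := (le_abs_self _).trans (abs_legP_le_one l hc)
  have : legP l (cos θ) * cos θ ^ (2 * n + l) ≤ cos θ :=
    (mul_le_of_le_one_left (pow_nonneg hc.1 _) hP).trans (pow_le_of_le_one hc.1 hc.2 (by omega))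
  unfold lam3BFactor
  linarith

theorem one_div_twenty_le_lam3BFactor (n : ℕ) {l : ℕ} (hl : 3 ≤ l) {θ : ℝ}
    (hθ : θ ∈ Icc (1 / (l : ℝ)) (2 / l)) :
    1 / 20 ≤ lam3BFactor n l θ := by
  have hl3 : (3 : ℝ) ≤ l := by exact_mod_cast hl
  have hθ0 : 0 ≤ θ := le_trans (by positivity) hθ.1
  have hθπ : θ ≤ π / 2 := by
    have : (2 : ℝ) / l ≤ 2 / 3 := by gcongr
    linarith [pi_gt_three, hθ.2]
  have hc := cos_mem_Icc_of_mem_Icc ⟨by linarith [pi_pos], hθπ⟩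
  have hP := legP_cos_le hl hθ
  have : legP l (cos θ) * cos θ ^ (2 * n + l) ≤ 19 / 20 := by
    rcases le_total (legP l (cos θ)) 0 with hneg | hpos
    · nlinarith [pow_nonneg hc.1 (2 * n + l)]
    · exact (mul_le_of_le_one_right hpos (pow_le_one₀ hc.1 hc.2)).trans hP
  unfold lam3BFactor
  linarith

theorem one_div_nat_add_two_le_pi_div_four (l : ℕ) : 1 / ((l : ℝ) + 2) ≤ π / 4 := by
  have : 1 / ((l : ℝ) + 2) ≤ 1 / 2 := by gcongr; linarith [l.cast_nonneg (α := ℝ)]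
  linarith [pi_gt_three]

theorem intervalIntegrable_rpow_mul_lam3BFactor (s : ℝ) (n l : ℕ) {a b : ℝ} (ha : 0 < a)
    (hab : a ≤ b) :
    IntervalIntegrable (fun θ => θ ^ (-2 * s - 1) * lam3BFactor n l θ) volume a b := by
  refine (ContinuousOn.mul ?_ (continuous_lam3BFactor n l).continuousOn).intervalIntegrable
  refine continuousOn_id.rpow_const fun θ hθ => Or.inl ?_
  rw [uIcc_of_le hab] at hθ
  exact (ha.trans_le hθ.1).ne'

theorem rpow_mul_lam3BFactor_nonneg (s : ℝ) (n l : ℕ) {θ : ℝ} (hθ : θ ∈ Icc 0 (π / 4)) :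
    0 ≤ θ ^ (-2 * s - 1) * lam3BFactor n l θ :=
  mul_nonneg (rpow_nonneg hθ.1 _)
    (lam3BFactor_mem_Icc n l ⟨by linarith [pi_pos, hθ.1], by linarith [pi_pos, hθ.2]⟩).1

theorem lam3B_nonneg (s : ℝ) (n l : ℕ) : 0 ≤ lam3B s n l :=
  intervalIntegral.integral_nonneg (one_div_nat_add_two_le_pi_div_four l) fun _ hθ =>
    rpow_mul_lam3BFactor_nonneg s n l ⟨le_trans (by positivity) hθ.1, hθ.2⟩

theorem integral_le_lam3B (s : ℝ) (n : ℕ) {l : ℕ} {u v : ℝ} (hu : 1 / ((l : ℝ) + 2) ≤ u)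
    (huv : u ≤ v) (hv : v ≤ π / 4) :
    ∫ θ in u..v, θ ^ (-2 * s - 1) * lam3BFactor n l θ ≤ lam3B s n l := by
  have ha : 0 < 1 / ((l : ℝ) + 2) := by positivity
  refine intervalIntegral.integral_mono_interval hu huv hv ?_
    (intervalIntegrable_rpow_mul_lam3BFactor s n l ha (hu.trans (huv.trans hv)))
  refine (ae_restrict_mem measurableSet_Ioc).mono fun θ hθ => ?_
  exact rpow_mul_lam3BFactor_nonneg s n l ⟨(ha.trans hθ.1).le, hθ.2⟩

theorem lam3B_le {s : ℝ} (hs : 0 < s) (n l : ℕ) :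
    lam3B s n l ≤ 2 ^ (2 * s) / s * (1 + l) ^ (2 * s) := by
  set a : ℝ := 1 / ((l : ℝ) + 2)
  have ha : 0 < a := by positivity
  have hab : a ≤ π / 4 := one_div_nat_add_two_le_pi_div_four l
  have hpi : 0 ≤ (π / 4) ^ (-2 * s) := rpow_nonneg (by positivity) _
  have ha_rpow : a ^ (-2 * s) = ((l : ℝ) + 2) ^ (2 * s) := by
    rw [neg_mul, rpow_neg_eq_inv_rpow]
    simp only [a, one_div, inv_inv]
  calc lam3B s n l ≤ ∫ θ in a..π / 4, 2 * θ ^ (-2 * s - 1) := by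
        rw [lam3B_eq_integral]
        refine intervalIntegral.integral_mono_on hab
          (intervalIntegrable_rpow_mul_lam3BFactor s n l ha hab)
          ((intervalIntegral.intervalIntegrable_rpow
            (Or.inr (notMem_uIcc_of_lt ha (ha.trans_le hab)))).const_mul 2) fun θ hθ => ?_
        have hθ0 : 0 < θ := lt_of_lt_of_le ha hθ.1
        have hθ_mem : θ ∈ Icc (-(π / 2)) (π / 2) :=
          ⟨by linarith [pi_pos], by linarith [pi_pos, hθ.2]⟩
        exact (mul_le_mul_of_nonneg_left (lam3BFactor_mem_Icc n l hθ_mem).2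
          (rpow_nonneg hθ0.le _)).trans_eq (mul_comm _ _)
    _ = (a ^ (-2 * s) - (π / 4) ^ (-2 * s)) / s := by
        rw [intervalIntegral.integral_const_mul, integral_rpow_neg_two_mul_sub_one hs.ne' ha hab]
        field_simp
    _ ≤ a ^ (-2 * s) / s := by gcongr; linarith
    _ ≤ (2 * (1 + l)) ^ (2 * s) / s := by
        rw [ha_rpow]
        gcongr
        linarith
    _ = 2 ^ (2 * s) / s * (1 + l) ^ (2 * s) := by
        rw [mul_rpow (by norm_num) (by positivity)]
        ring

theorem lam3B_ge_of_one_le {s : ℝ} (hs : 0 ≤ s) (n : ℕ) {l : ℕ} (hl : 1 ≤ l) :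
    (1 - cos (1 / 2)) / 4 ≤ lam3B s n l := by
  have h_sub : 1 / ((l : ℝ) + 2) ≤ 1 / 2 := by gcongr; linarith [l.cast_nonneg (α := ℝ)]
  have h_pi : (3 : ℝ) / 4 ≤ π / 4 := by linarith [pi_gt_three]
  calc (1 - cos (1 / 2)) / 4 = ∫ _ in (1 / 2 : ℝ)..3 / 4, 1 - cos (1 / 2) := by
        rw [intervalIntegral.integral_const, smul_eq_mul]
        ring
    _ ≤ ∫ θ in (1 / 2 : ℝ)..3 / 4, θ ^ (-2 * s - 1) * lam3BFactor n l θ := by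
        refine intervalIntegral.integral_mono_on (by norm_num) intervalIntegrable_const
          (intervalIntegrable_rpow_mul_lam3BFactor s n l (by norm_num) (by norm_num))
          fun θ hθ => ?_
        have hθ0 : 0 < θ := lt_of_lt_of_le (by norm_num) hθ.1
        have hθ_mem : θ ∈ Icc (-(π / 2)) (π / 2) :=
          ⟨by linarith, by linarith [pi_gt_three, hθ.2]⟩
        have h_cos : cos θ ≤ cos (1 / 2) :=
          cos_le_cos_of_nonneg_of_le_pi (by norm_num) (by linarith [pi_gt_three, hθ.2]) hθ.1
        have h_rpow : 1 ≤ θ ^ (-2 * s - 1) :=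
          one_le_rpow_of_pos_of_le_one_of_nonpos hθ0 (by linarith [hθ.2]) (by linarith)
        calc 1 - cos (1 / 2) ≤ lam3BFactor n l θ := by
              linarith [one_sub_cos_le_lam3BFactor n hl hθ_mem]
          _ ≤ θ ^ (-2 * s - 1) * lam3BFactor n l θ :=
              le_mul_of_one_le_left (lam3BFactor_mem_Icc n l hθ_mem).1 h_rpow
    _ ≤ lam3B s n l := integral_le_lam3B s n h_sub (by norm_num) h_pi

theorem lam3B_ge_of_three_le {s : ℝ} (hs : 0 < s) (n : ℕ) {l : ℕ} (hl : 3 ≤ l) :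
    (1 - 2 ^ (-2 * s)) / (40 * s) * (l : ℝ) ^ (2 * s) ≤ lam3B s n l := by
  have hl3 : (3 : ℝ) ≤ l := by exact_mod_cast hl
  have hu : 0 < 1 / (l : ℝ) := by positivity
  have huv : 1 / (l : ℝ) ≤ 2 / l := by gcongr; norm_num
  have h_sub : 1 / ((l : ℝ) + 2) ≤ 1 / l := by gcongr; linarith
  have h_pi : 2 / (l : ℝ) ≤ π / 4 := by
    have : (2 : ℝ) / l ≤ 2 / 3 := by gcongr
    linarith [pi_gt_three]
  have hu_rpow : (1 / (l : ℝ)) ^ (-2 * s) = (l : ℝ) ^ (2 * s) := by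
    rw [neg_mul, rpow_neg_eq_inv_rpow, one_div, inv_inv]
  have hv_rpow : (2 / (l : ℝ)) ^ (-2 * s) = 2 ^ (-2 * s) * (l : ℝ) ^ (2 * s) := by
    rw [div_eq_mul_inv, mul_rpow (by norm_num) (by positivity), inv_rpow (by positivity),
      ← rpow_neg (by positivity), neg_mul, neg_neg]
  calc (1 - 2 ^ (-2 * s)) / (40 * s) * (l : ℝ) ^ (2 * s)
        = ∫ θ in (1 / (l : ℝ))..2 / l, 1 / 20 * θ ^ (-2 * s - 1) := by
        rw [intervalIntegral.integral_const_mul, integral_rpow_neg_two_mul_sub_one hs.ne' hu huv,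
          hu_rpow, hv_rpow]
        field_simp
        ring
    _ ≤ ∫ θ in (1 / (l : ℝ))..2 / l, θ ^ (-2 * s - 1) * lam3BFactor n l θ := by
        refine intervalIntegral.integral_mono_on huv
          ((intervalIntegral.intervalIntegrable_rpow
            (Or.inr (notMem_uIcc_of_lt hu (hu.trans_le huv)))).const_mul _)
          (intervalIntegrable_rpow_mul_lam3BFactor s n l hu huv) fun θ hθ => ?_
        exact (mul_comm _ _).trans_le (mul_le_mul_of_nonneg_left
          (one_div_twenty_le_lam3BFactor n hl hθ) (rpow_nonneg (hu.trans_le hθ.1).le _))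
    _ ≤ lam3B s n l := integral_le_lam3B s n h_sub huv h_pi

theorem exists_pos_mul_rpow_le_lam3B {s : ℝ} (hs : 0 < s) :
    ∃ c > 0, ∀ n l : ℕ, c * (l : ℝ) ^ (2 * s) ≤ lam3B s n l := by
  have h_cos : cos (1 / 2) < 1 := by
    simpa using cos_lt_cos_of_nonneg_of_le_pi le_rfl (by linarith [pi_gt_three])
      (by norm_num : (0 : ℝ) < 1 / 2)
  have h_two : (2 : ℝ) ^ (-2 * s) < 1 := rpow_lt_one_of_one_lt_of_neg one_lt_two (by linarith)
  set c₁ : ℝ := (1 - 2 ^ (-2 * s)) / (40 * s)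
  set c₂ : ℝ := (1 - cos (1 / 2)) / 4 / 2 ^ (2 * s)
  have hc₁ : 0 < c₁ := div_pos (by linarith) (by positivity)
  have hc₂ : 0 < c₂ := div_pos (by linarith) (by positivity)
  refine ⟨min c₁ c₂, lt_min hc₁ hc₂, fun n l => ?_⟩
  rcases Nat.lt_or_ge l 3 with hl | hl
  · rcases Nat.eq_zero_or_pos l with rfl | hl_pos
    · simpa [zero_rpow (by positivity : 2 * s ≠ 0)] using lam3B_nonneg s n 0
    · calc min c₁ c₂ * (l : ℝ) ^ (2 * s) ≤ c₂ * 2 ^ (2 * s) := by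
            gcongr
            · exact min_le_right _ _
            · exact_mod_cast Nat.le_of_lt_succ hl
        _ = (1 - cos (1 / 2)) / 4 := div_mul_cancel₀ _ (by positivity)
        _ ≤ lam3B s n l := lam3B_ge_of_one_le hs.le n hl_pos
  · calc min c₁ c₂ * (l : ℝ) ^ (2 * s) ≤ c₁ * (l : ℝ) ^ (2 * s) := by
          gcongr
          exact min_le_left _ _
      _ ≤ lam3B s n l := lam3B_ge_of_three_le hs n hl

theorem lam3B_bounds_general (s : ℝ) (hs0 : 0 < s) :
    ∃ c : ℝ, 0 < c ∧ ∀ n l : ℕ,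
      c * (l : ℝ) ^ (2 * s) ≤ lam3B s n l ∧
      lam3B s n l ≤ c⁻¹ * (1 + (l : ℝ)) ^ (2 * s) := by
  obtain ⟨c, hc, h_lower⟩ := exists_pos_mul_rpow_le_lam3B hs0
  set C : ℝ := 2 ^ (2 * s) / s
  have hC : 0 < C := by positivity
  refine ⟨min c C⁻¹, lt_min hc (inv_pos.2 hC), fun n l => ⟨?_, ?_⟩⟩
  · exact (mul_le_mul_of_nonneg_right (min_le_left _ _) (rpow_nonneg l.cast_nonneg _)).trans
      (h_lower n l)
  · calc lam3B s n l ≤ C * (1 + (l : ℝ)) ^ (2 * s) := lam3B_le hs0 n l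
      _ ≤ (min c C⁻¹)⁻¹ * (1 + (l : ℝ)) ^ (2 * s) := by
          gcongr
          exact le_inv_of_le_inv₀ (lt_min hc (inv_pos.2 hC)) (min_le_right _ _)

theorem lam3B_bounds (s : ℝ) (hs0 : 0 < s) (hs1 : s < 1) :
    ∃ c : ℝ, 0 < c ∧ ∀ n l : ℕ,
      c * (l : ℝ) ^ (2 * s) ≤ lam3B s n l ∧
      lam3B s n l ≤ c⁻¹ * (1 + (l : ℝ)) ^ (2 * s) :=
  lam3B_bounds_general s hs0
end

section
/- Let ν be an even function, locally integrable on ℝ∖{0}, such that θ ↦ θ²ν(θ) belongs to L¹(ℝ). Then for every twice continuously differentiable, compactly supported function φ : ℝ → ℂ, the limit lim_{ε→0⁺} ∫_{|θ|≥ε} ν(θ)(φ(θ) − φ(0)) dθ exists and equals ∫₀¹ ∫_ℝ θ²ν(θ) φ''(tθ) dθ (1−t) dt. -/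
/-!
Taylor's formula with integral remainder at the origin splits `ν θ • (φ θ - φ 0)` into
`(θ * ν θ) • φ'(0)`, which is odd and so integrates to zero over the symmetric set
`{θ | ε ≤ |θ|}`, and `(θ ^ 2 * ν θ) • R θ` with `R θ = ∫₀¹ (1 - t) φ''(t θ) dt`. Since `R` is
bounded, the second term is integrable on all of `ℝ`: dominated convergence gives the limit as
`ε → 0⁺`, and Fubini turns it into the stated double integral.
-/

open MeasureTheory Real Filter Set Topology

variable {E : Type*} [NormedAddCommGroup E] [NormedSpace ℝ E]

theorem integral_eq_zero_of_ae_neg_eq_neg {G : Type*} [MeasurableSpace G] [AddGroup G]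
    [MeasurableNeg G] {μ : Measure G} [μ.IsNegInvariant] {f : G → E}
    (hf : ∀ᵐ x ∂μ, f (-x) = -f x) : ∫ x, f x ∂μ = 0 := by
  have : IsAddTorsionFree E := .of_isTorsionFree ℝ E
  have h := integral_neg_eq_self f μ
  rw [integral_congr_ae hf, integral_neg] at h
  exact self_eq_neg.mp h.symm

theorem measurableSet_le_abs (ε : ℝ) : MeasurableSet {θ : ℝ | ε ≤ |θ|} :=
  measurableSet_le measurable_const measurable_abs

theorem tendsto_setIntegral_le_abs_nhdsGT {f : ℝ → E} (hf : Integrable f) :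
    Tendsto (fun ε => ∫ θ in {θ | ε ≤ |θ|}, f θ) (𝓝[>] 0) (𝓝 (∫ θ, f θ)) := by
  simp_rw [← integral_indicator (measurableSet_le_abs _)]
  refine tendsto_integral_filter_of_dominated_convergence (‖f ·‖)
    (.of_forall fun ε => hf.aestronglyMeasurable.indicator (measurableSet_le_abs ε))
    (.of_forall fun ε => .of_forall fun θ => norm_indicator_le_norm_self _ _) hf.norm ?_
  filter_upwards [volume.ae_ne 0] with θ hθ
  refine tendsto_const_nhds.congr' ?_
  filter_upwards [Ioc_mem_nhdsGT (abs_pos.2 hθ)] with ε hε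
  exact (indicator_of_mem (show θ ∈ {θ | ε ≤ |θ|} from hε.2) f).symm

theorem setIntegral_le_abs_mul_smul_eq_zero {ν : ℝ → ℝ}
    (hν_even : ∀ᵐ θ, ν (-θ) = ν θ) (ε : ℝ) (c : E) :
    ∫ θ in {θ | ε ≤ |θ|}, (θ * ν θ) • c = 0 := by
  rw [← integral_indicator (measurableSet_le_abs ε)]
  refine integral_eq_zero_of_ae_neg_eq_neg ?_
  filter_upwards [hν_even] with θ hθ
  by_cases h : ε ≤ |θ| <;> simp [h, hθ]

theorem integrableOn_le_abs_mul {ν : ℝ → ℝ} (hν : Integrable fun θ => θ ^ 2 * ν θ) {ε : ℝ}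
    (hε : 0 < ε) : IntegrableOn (fun θ => θ * ν θ) {θ | ε ≤ |θ|} := by
  have hbound : ∀ᵐ θ ∂volume.restrict {θ | ε ≤ |θ|}, ‖θ⁻¹‖ ≤ ε⁻¹ := by
    filter_upwards [ae_restrict_mem (measurableSet_le_abs ε)] with θ hθ
    rw [norm_inv, Real.norm_eq_abs]
    exact inv_anti₀ hε hθ
  refine IntegrableOn.congr_fun
    (hν.integrableOn.bdd_mul measurable_inv.aestronglyMeasurable hbound) (fun θ hθ => ?_)
    (measurableSet_le_abs ε)
  have : θ ≠ 0 := abs_pos.1 (hε.trans_le hθ)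
  field_simp

theorem norm_one_sub_smul_le {t : ℝ} (ht : t ∈ Ioo (0:ℝ) 1) (x : E) : ‖(1 - t) • x‖ ≤ ‖x‖ := by
  rw [norm_smul, Real.norm_of_nonneg (by linarith [ht.2])]
  exact mul_le_of_le_one_left (norm_nonneg x) (by linarith [ht.1])

noncomputable def remainderIntegral (ψ : ℝ → E) (θ : ℝ) : E :=
  ∫ t in Ioo (0:ℝ) 1, (1 - t) • ψ (t * θ)

section RemainderIntegral

variable {ψ : ℝ → E} {C : ℝ}

theorem norm_remainderIntegral_le (hψ : ∀ x, ‖ψ x‖ ≤ C) (θ : ℝ) :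
    ‖remainderIntegral ψ θ‖ ≤ C := by
  have h := norm_setIntegral_le_of_norm_le_const (measure_Ioo_lt_top (μ := volume))
    fun t ht => (norm_one_sub_smul_le ht (ψ (t * θ))).trans (hψ _)
  simpa [remainderIntegral, Real.volume_real_Ioo] using h

theorem continuous_remainderIntegral (hψc : Continuous ψ) (hψ : ∀ x, ‖ψ x‖ ≤ C) :
    Continuous (remainderIntegral ψ) := by
  refine continuous_of_dominated (bound := fun _ => C)
    (fun θ => by fun_prop) (fun θ => ?_) (integrable_const C) (.of_forall fun t => by fun_prop)
  filter_upwards [ae_restrict_mem measurableSet_Ioo] with t ht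
  exact (norm_one_sub_smul_le ht _).trans (hψ _)

theorem integral_smul_remainderIntegral [CompleteSpace E] {w : ℝ → ℝ} (hw : Integrable w)
    (hψc : Continuous ψ) (hψ : ∀ x, ‖ψ x‖ ≤ C) :
    ∫ θ, w θ • remainderIntegral ψ θ = ∫ t in Ioo (0:ℝ) 1, (1 - t) • ∫ θ, w θ • ψ (t * θ) := by
  have hint : Integrable (Function.uncurry fun θ t => w θ • (1 - t) • ψ (t * θ))
      (volume.prod (volume.restrict (Ioo (0:ℝ) 1))) := by
    refine (hw.norm.mul_prod (integrable_const C)).mono'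
      (hw.aestronglyMeasurable.comp_fst.smul (by fun_prop : Continuous _).aestronglyMeasurable) ?_
    filter_upwards [Measure.quasiMeasurePreserving_snd.tendsto_ae.eventually
      (ae_restrict_mem measurableSet_Ioo)] with p hp
    rw [Function.uncurry_apply_pair, norm_smul]
    exact mul_le_mul_of_nonneg_left ((norm_one_sub_smul_le hp _).trans (hψ _)) (norm_nonneg _)
  simp_rw [remainderIntegral, ← integral_smul]
  rw [integral_integral_swap hint]
  simp_rw [smul_comm (w _) (1 - _ : ℝ)]

end RemainderIntegral

theorem sub_eq_smul_deriv_add_sq_smul_remainderIntegral [CompleteSpace E] {f : ℝ → E}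
    (hf : ContDiff ℝ 2 f) (θ : ℝ) :
    f θ - f 0 = θ • deriv f 0 + θ ^ 2 • remainderIntegral (iteratedDeriv 2 f) θ := by
  have h := map_add_eq_sum_add_integral_iteratedFDeriv (n := 1) (x := 0) (y := θ)
    (fun t _ => hf.contDiffAt)
  simp only [iteratedFDeriv_apply_eq_iteratedDeriv_mul_prod, Finset.sum_range_succ,
    Finset.range_one, Finset.sum_singleton, zero_add, smul_eq_mul, Finset.prod_const,
    Finset.card_univ, Fintype.card_fin, iteratedDeriv_zero, iteratedDeriv_one, Nat.factorial,
    Nat.cast_one, inv_one, one_smul, pow_zero, pow_one, Nat.reduceAdd, Nat.succ_eq_add_one,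
    mul_one] at h
  rw [h, add_assoc, add_sub_cancel_left, intervalIntegral.integral_of_le zero_le_one,
    integral_Ioc_eq_integral_Ioo, remainderIntegral, ← integral_smul]
  simp only [smul_comm (θ ^ 2)]

theorem setIntegral_le_abs_smul_sub_eq_remainderIntegral [CompleteSpace E] {ν : ℝ → ℝ}
    (hν_even : ∀ᵐ θ, ν (-θ) = ν θ) (hν_int : Integrable fun θ => θ ^ 2 * ν θ)
    {φ : ℝ → E} (hφ : ContDiff ℝ 2 φ)
    (hR : Integrable fun θ => (θ ^ 2 * ν θ) • remainderIntegral (iteratedDeriv 2 φ) θ)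
    {ε : ℝ} (hε : 0 < ε) :
    ∫ θ in {θ | ε ≤ |θ|}, ν θ • (φ θ - φ 0) =
      ∫ θ in {θ | ε ≤ |θ|}, (θ ^ 2 * ν θ) • remainderIntegral (iteratedDeriv 2 φ) θ := by
  have hsplit : ∀ θ, ν θ • (φ θ - φ 0) =
      (θ * ν θ) • deriv φ 0 + (θ ^ 2 * ν θ) • remainderIntegral (iteratedDeriv 2 φ) θ := by
    intro θ
    rw [sub_eq_smul_deriv_add_sq_smul_remainderIntegral hφ, smul_add, smul_smul,
      smul_smul, mul_comm (ν θ), mul_comm (ν θ)]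
  simp_rw [hsplit]
  rw [integral_add ((integrableOn_le_abs_mul hν_int hε).smul_const _) hR.integrableOn,
    setIntegral_le_abs_mul_smul_eq_zero hν_even, zero_add]

theorem finite_part_exists_general (ν : ℝ → ℝ)
    (hν_even : ∀ᵐ θ ∂(volume : Measure ℝ), ν (-θ) = ν θ)
    (hν_int : Integrable (fun θ : ℝ => θ ^ 2 * ν θ))
    (φ : ℝ → ℂ) (hφ : ContDiff ℝ 2 φ) (hφc : HasCompactSupport φ) :
    Tendsto (fun ε : ℝ => ∫ θ in {θ : ℝ | ε ≤ |θ|}, ν θ • (φ θ - φ 0))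
      (nhdsWithin 0 (Set.Ioi 0))
      (nhds (∫ t in Set.Ioo (0:ℝ) 1,
        (1 - t) • ∫ θ : ℝ, (θ ^ 2 * ν θ) • iteratedDeriv 2 φ (t * θ))) := by
  have hψc : Continuous (iteratedDeriv 2 φ) := hφ.continuous_iteratedDeriv 2 le_rfl
  have hψs : HasCompactSupport (iteratedDeriv 2 φ) := by
    rw [iteratedDeriv_succ, iteratedDeriv_one]
    exact hφc.deriv.deriv
  obtain ⟨C, hC⟩ := hψs.exists_bound_of_continuous hψc
  have hR : Integrable fun θ => (θ ^ 2 * ν θ) • remainderIntegral (iteratedDeriv 2 φ) θ :=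
    hν_int.smul_bdd C (continuous_remainderIntegral hψc hC).aestronglyMeasurable
      (.of_forall (norm_remainderIntegral_le hC))
  rw [← integral_smul_remainderIntegral hν_int hψc hC]
  refine (tendsto_setIntegral_le_abs_nhdsGT hR).congr' ?_
  filter_upwards [self_mem_nhdsWithin] with ε hε
  exact (setIntegral_le_abs_smul_sub_eq_remainderIntegral hν_even hν_int hφ hR hε).symm

/-- For an even, locally integrable (away from the origin) function `ν` with
`θ²ν(θ) ∈ L¹(ℝ)` and any `C²` compactly supported `φ`, the principal value
`lim_{ε→0⁺} ∫_{|θ|≥ε} ν(θ)(φ(θ) − φ(0)) dθ` exists and equals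
`∫₀¹ ∫_ℝ θ²ν(θ) φ''(tθ) dθ (1−t) dt`. -/
theorem finite_part_exists (ν : ℝ → ℝ)
    (hν_even : ∀ᵐ θ ∂(volume : Measure ℝ), ν (-θ) = ν θ)
    (hν_loc : LocallyIntegrableOn ν ({(0:ℝ)}ᶜ))
    (hν_int : Integrable (fun θ : ℝ => θ ^ 2 * ν θ))
    (φ : ℝ → ℂ) (hφ : ContDiff ℝ 2 φ) (hφc : HasCompactSupport φ) :
    Tendsto (fun ε : ℝ => ∫ θ in {θ : ℝ | ε ≤ |θ|}, ν θ • (φ θ - φ 0))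
      (nhdsWithin 0 (Set.Ioi 0))
      (nhds (∫ t in Set.Ioo (0:ℝ) 1,
        (1 - t) • ∫ θ : ℝ, (θ ^ 2 * ν θ) • iteratedDeriv 2 φ (t * θ))) :=
  finite_part_exists_general ν hν_even hν_int φ hφ hφc
end

section
/- Let ν be an even function, locally integrable on ℝ∖{0}, with θ²ν(θ) ∈ L¹(ℝ), and let φ : ℝ → ℂ be a C¹ function with Lipschitz derivative such that φ(0) = 0. Then ν·φ̌ ∈ L¹(ℝ), where φ̌(θ) = ½(φ(θ) + φ(−θ)) is the even part of φ, and lim_{ε→0⁺} ∫_{|θ|≥ε} ν(θ) φ(θ) dθ = ∫_ℝ ν(θ) φ̌(θ) dθ. -/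
open MeasureTheory Real Filter Set Topology

/-! Since `φ(0) = 0` and `φ'` is `K`-Lipschitz, `φ(θ) = θ φ'(0) + O(Kθ²)`, so the even part satisfies
`|φ̌(θ)| ≤ Kθ²` and `νφ̌` is dominated by `K θ²ν ∈ L¹`; its truncated integrals then converge to
`∫ νφ̌`. On each truncation `{|θ| ≥ ε}`, where `νφ` is still integrable because `|θ| ≤ θ²/ε`,
the odd part of `φ` integrates to zero against the even `ν`, so `∫ νφ = ∫ νφ̌` there. -/

section Taylor

variable {E : Type*} [NormedAddCommGroup E] [NormedSpace ℝ E] {f : ℝ → E} {K : NNReal}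

theorem norm_sub_sub_smul_deriv_le (hf : Differentiable ℝ f) (hK : LipschitzWith K (deriv f))
    (x y : ℝ) : ‖f y - f x - (y - x) • deriv f x‖ ≤ K * (y - x) ^ 2 := by
  set g : ℝ → E := fun z => f z - (z - x) • deriv f x
  have hg : ∀ z, HasDerivAt g (deriv f z - deriv f x) z := fun z => by
    have h := (hf z).hasDerivAt.sub (((hasDerivAt_id z).sub_const x).smul_const (deriv f x))
    rwa [one_smul] at h
  have bound : ∀ z ∈ uIcc x y, ‖deriv g z‖ ≤ K * |y - x| := fun z hz => by
    rw [(hg z).deriv, ← dist_eq_norm]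
    refine (hK.dist_le_mul z x).trans ?_
    rw [Real.dist_eq]
    exact mul_le_mul_of_nonneg_left (abs_sub_left_of_mem_uIcc hz) K.coe_nonneg
  calc ‖f y - f x - (y - x) • deriv f x‖ = ‖g y - g x‖ := by simp [g, sub_right_comm]
    _ ≤ K * |y - x| * ‖y - x‖ :=
      (convex_uIcc x y).norm_image_sub_le_of_norm_deriv_le (fun z _ => (hg z).differentiableAt)
        bound left_mem_uIcc right_mem_uIcc
    _ = K * (y - x) ^ 2 := by rw [Real.norm_eq_abs, mul_assoc, abs_mul_abs_self, sq]

theorem norm_le_of_lipschitzWith_deriv (hf : Differentiable ℝ f) (hK : LipschitzWith K (deriv f))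
    (hf0 : f 0 = 0) (t : ℝ) : ‖f t‖ ≤ ‖deriv f 0‖ * |t| + K * t ^ 2 := by
  have h := norm_sub_sub_smul_deriv_le hf hK 0 t
  simp only [hf0, sub_zero] at h
  calc ‖f t‖ = ‖(f t - t • deriv f 0) + t • deriv f 0‖ := by rw [sub_add_cancel]
    _ ≤ K * t ^ 2 + |t| * ‖deriv f 0‖ := by
      grw [norm_add_le, h, norm_smul, Real.norm_eq_abs]
    _ = ‖deriv f 0‖ * |t| + K * t ^ 2 := by ring

theorem norm_add_comp_neg_le (hf : Differentiable ℝ f) (hK : LipschitzWith K (deriv f))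
    (hf0 : f 0 = 0) (t : ℝ) : ‖f t + f (-t)‖ ≤ 2 * K * t ^ 2 := by
  have h₁ := norm_sub_sub_smul_deriv_le hf hK 0 t
  have h₂ := norm_sub_sub_smul_deriv_le hf hK 0 (-t)
  simp only [hf0, sub_zero, neg_sq, neg_smul, sub_neg_eq_add] at h₁ h₂
  calc ‖f t + f (-t)‖ = ‖(f t - t • deriv f 0) + (f (-t) + t • deriv f 0)‖ := by
        congr 1; abel
    _ ≤ K * t ^ 2 + K * t ^ 2 := by grw [norm_add_le, h₁, h₂]
    _ = 2 * K * t ^ 2 := by ring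

end Taylor

section Symmetrization

variable {G : Type*} [AddGroup G] [MeasurableSpace G] [MeasurableNeg G] {μ : Measure G}
  [μ.IsNegInvariant] {ν : G → ℝ} {s : Set G}

theorem setIntegral_smul_comp_neg_of_even {E : Type*} [NormedAddCommGroup E] [NormedSpace ℝ E]
    (hν : ∀ᵐ x ∂μ, ν (-x) = ν x) (hs : MeasurableSet s) (hs_neg : -s = s) (f : G → E) :
    ∫ x in s, ν x • f (-x) ∂μ = ∫ x in s, ν x • f x ∂μ := by
  rw [← integral_indicator hs, ← integral_indicator hs, ← integral_neg_eq_self]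
  refine integral_congr_ae ?_
  filter_upwards [hν] with x hx
  have hmem : -x ∈ s ↔ x ∈ s := by rw [← Set.mem_neg, hs_neg]
  by_cases h : x ∈ s <;> simp [Set.indicator, h, hmem, hx]

theorem setIntegral_smul_evenPart_of_even {𝕜 : Type*} [RCLike 𝕜] {f : G → 𝕜}
    (hν : ∀ᵐ x ∂μ, ν (-x) = ν x) (hs : MeasurableSet s) (hs_neg : -s = s)
    (hf : IntegrableOn (fun x => ν x • f x) s μ) :
    ∫ x in s, ν x • ((f x + f (-x)) / 2) ∂μ = ∫ x in s, ν x • f x ∂μ := by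
  have hf_neg : IntegrableOn (fun x => ν x • f (-x)) s μ := by
    have h := hf.comp_neg
    rw [hs_neg] at h
    exact h.congr_fun_ae (ae_restrict_of_ae (hν.mono fun x hx => congrArg (· • f (-x)) hx))
  calc ∫ x in s, ν x • ((f x + f (-x)) / 2) ∂μ
      = ((∫ x in s, ν x • f x ∂μ) + ∫ x in s, ν x • f (-x) ∂μ) / 2 := by
        simp_rw [← smul_div_assoc, smul_add]
        rw [integral_div, integral_add hf hf_neg]
    _ = ∫ x in s, ν x • f x ∂μ := by
        rw [setIntegral_smul_comp_neg_of_even hν hs hs_neg]; ring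

end Symmetrization

section WeightedIntegrability

variable {E : Type*} [NormedAddCommGroup E] [NormedSpace ℝ E] {ν : ℝ → ℝ} {g : ℝ → E}

theorem integrable_smul_of_norm_le_mul_sq {μ : Measure ℝ}
    (hν : Integrable (fun θ => θ ^ 2 * ν θ) μ) (hνm : AEStronglyMeasurable ν μ)
    (hg : AEStronglyMeasurable g μ) {C : ℝ} (hgC : ∀ᵐ θ ∂μ, ‖g θ‖ ≤ C * θ ^ 2) :
    Integrable (fun θ => ν θ • g θ) μ := by
  refine (hν.const_mul C).mono (hνm.smul hg) (hgC.mono fun θ hθ => ?_)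
  calc ‖ν θ • g θ‖ = |ν θ| * ‖g θ‖ := by rw [norm_smul, Real.norm_eq_abs]
    _ ≤ |ν θ| * (C * θ ^ 2) := by gcongr
    _ ≤ |ν θ| * (|C| * θ ^ 2) := by gcongr; exact le_abs_self C
    _ = ‖C * (θ ^ 2 * ν θ)‖ := by
        rw [Real.norm_eq_abs, abs_mul, abs_mul, abs_of_nonneg (sq_nonneg θ)]; ring

theorem integrableOn_abs_ge_smul_of_norm_le (hν : Integrable (fun θ => θ ^ 2 * ν θ))
    (hνm : AEStronglyMeasurable ν volume) (hg : AEStronglyMeasurable g volume) {ε a b : ℝ}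
    (hε : 0 < ε) (ha : 0 ≤ a) (hgab : ∀ θ, ‖g θ‖ ≤ a * |θ| + b * θ ^ 2) :
    IntegrableOn (fun θ => ν θ • g θ) {θ | ε ≤ |θ|} := by
  refine integrable_smul_of_norm_le_mul_sq hν.restrict hνm.restrict hg.restrict (C := a / ε + b)
    (ae_restrict_of_forall_mem (measurableSet_le measurable_const measurable_abs) fun θ hθ => ?_)
  have hθ_le : a * |θ| ≤ a / ε * θ ^ 2 := by
    rw [div_mul_eq_mul_div, le_div_iff₀ hε, ← sq_abs θ]
    have : ε ≤ |θ| := hθ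
    nlinarith [mul_le_mul_of_nonneg_left this (mul_nonneg ha (abs_nonneg θ))]
  linarith [hgab θ]

end WeightedIntegrability

theorem tendsto_setIntegral_abs_ge {E : Type*} [NormedAddCommGroup E] [NormedSpace ℝ E]
    {g : ℝ → E} (hg : Integrable g) :
    Tendsto (fun ε => ∫ θ in {θ : ℝ | ε ≤ |θ|}, g θ) (𝓝[>] 0) (𝓝 (∫ θ, g θ)) := by
  have hcompl : ∀ ε : ℝ, {θ : ℝ | ε ≤ |θ|}ᶜ = Metric.ball 0 ε := fun ε => by
    ext θ; simp
  have hvol : Tendsto (fun ε => volume {θ : ℝ | ε ≤ |θ|}ᶜ) (𝓝[>] 0) (𝓝 0) := by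
    simp_rw [hcompl, Real.volume_ball]
    rw [← ENNReal.ofReal_zero]
    exact ENNReal.tendsto_ofReal
      (((continuous_const_mul 2).tendsto' 0 0 (mul_zero 2)).mono_left nhdsWithin_le_nhds)
  have h := tendsto_const_nhds (x := ∫ θ, g θ) |>.sub (hg.tendsto_setIntegral_nhds_zero hvol)
  rw [sub_zero] at h
  refine h.congr fun ε => ?_
  rw [← integral_add_compl (measurableSet_le measurable_const measurable_abs) hg, add_sub_cancel_right]

/-- Extension of the finite part `fp(ν)` to `C^{1,1}` functions vanishing at the
origin: if `ν` is even, locally integrable away from the origin, with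
`θ²ν ∈ L¹(ℝ)`, and `φ` is `C¹` with Lipschitz derivative and `φ(0) = 0`, then
`ν·φ̌ ∈ L¹(ℝ)` and `lim_{ε→0⁺} ∫_{|θ|≥ε} ν(θ)φ(θ) dθ = ∫_ℝ ν(θ)φ̌(θ) dθ`. -/
theorem finite_part_extension (ν : ℝ → ℝ)
    (hν_even : ∀ᵐ θ ∂(volume : Measure ℝ), ν (-θ) = ν θ)
    (hν_loc : LocallyIntegrableOn ν ({(0:ℝ)}ᶜ))
    (hν_int : Integrable (fun θ : ℝ => θ ^ 2 * ν θ))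
    (φ : ℝ → ℂ) (hφ : ContDiff ℝ 1 φ)
    (K : NNReal) (hK : LipschitzWith K (deriv φ)) (hφ0 : φ 0 = 0) :
    Integrable (fun θ : ℝ => ν θ • ((φ θ + φ (-θ)) / 2)) ∧
    Tendsto (fun ε : ℝ => ∫ θ in {θ : ℝ | ε ≤ |θ|}, ν θ • φ θ)
      (nhdsWithin 0 (Set.Ioi 0))
      (nhds (∫ θ : ℝ, ν θ • ((φ θ + φ (-θ)) / 2))) := by
  have hφd : Differentiable ℝ φ := hφ.differentiable one_ne_zero
  have hφc : Continuous φ := hφ.continuous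
  have hνm : AEStronglyMeasurable ν volume := by
    simpa using hν_loc.aestronglyMeasurable
  have h_even : Integrable (fun θ : ℝ => ν θ • ((φ θ + φ (-θ)) / 2)) := by
    refine integrable_smul_of_norm_le_mul_sq hν_int hνm (by fun_prop) (C := K)
      (ae_of_all _ fun θ => ?_)
    rw [norm_div, RCLike.norm_ofNat]
    linarith [norm_add_comp_neg_le hφd hK hφ0 θ]
  refine ⟨h_even, (tendsto_setIntegral_abs_ge h_even).congr' ?_⟩
  filter_upwards [self_mem_nhdsWithin] with ε hε
  have hS_neg : -{θ : ℝ | ε ≤ |θ|} = {θ | ε ≤ |θ|} := by ext θ; simp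
  exact setIntegral_smul_evenPart_of_even hν_even
    (measurableSet_le measurable_const measurable_abs) hS_neg
    (integrableOn_abs_ge_smul_of_norm_le hν_int hνm hφc.aestronglyMeasurable hε (norm_nonneg _)
      (norm_le_of_lipschitzWith_deriv hφd hK hφ0))
end
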